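/- Let (g,·) be a finite-dimensional pre-Lie algebra over a field K of characteristic 0 and let r₁, r₂ be s-matrices on g (symmetric elements of Sym²(g), identified with symmetric linear maps r_i^♯: g* → g, with ⟪r_i,r_i⟫ = 0) such that r₂^♯ is bijective and r₁, r₂ are compatible, i.e. every K-linear combination k₁r₁ + k₂r₂ is again an s-matrix. Set N = r₁^♯∘(r₂^♯)⁻¹ and S = (r₂^♯)⁻¹∘r₁^♯. Then for i = 1,2: S is a Nijenhuis operator on the pre-Lie algebra (g*, ·^{r_i}), N is a Nijenhuis operator on (g,·), and N∘r_i^♯∘S = N²∘r_i^♯; that is, (S,N) is a Nijenhuis pair on the pre-Lie-morphism triple ((g*,·^{r_i}),(g,·),r_i^♯), where ξ ·^{r_i} η = ad*_{r_i^♯(ξ)}η − R*_{r_i^♯(η)}ξ. -/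
import Mathlib


/-- The product `ξ ·^r η := ad*_{r♯ ξ} η − R*_{r♯ η} ξ` on the dual space `g*`, where
`(ad*_x ξ)(y) = −ξ(x·y − y·x)` and `(R*_x ξ)(y) = −ξ(y·x)`. -/
def sProd {K g : Type*} [Field K] [AddCommGroup g] [Module K g]
    (mul : g →ₗ[K] g →ₗ[K] g) (rsharp : Module.Dual K g →ₗ[K] g)
    (ξ η : Module.Dual K g) : Module.Dual K g :=
  - η.comp (mul (rsharp ξ) - mul.flip (rsharp ξ)) + ξ.comp (mul.flip (rsharp η))

/-- The `s`-matrix condition `⟪r, r⟫ = 0` for a (symmetric) map `rs : g* → g` on a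
pre-Lie algebra `(g, mul)`. -/
def IsSMatrixMap {K g : Type*} [Field K] [AddCommGroup g] [Module K g]
    (mul : g →ₗ[K] g →ₗ[K] g) (rs : Module.Dual K g →ₗ[K] g) : Prop :=
  ∀ ξ η ζ : Module.Dual K g,
    - ξ (mul (rs η) (rs ζ)) + η (mul (rs ξ) (rs ζ))
      + ζ (mul (rs ξ) (rs η) - mul (rs η) (rs ξ)) = 0

/-- If `r₁, r₂` are compatible `s`-matrices on a finite-dimensional pre-Lie
algebra `(g,·)` with `r₂♯` bijective, then with `N = r₁♯∘(r₂♯)⁻¹` (i.e. `N∘r₂♯ = r₁♯`) and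
`S = (r₂♯)⁻¹∘r₁♯` (i.e. `r₂♯∘S = r₁♯`), for `i = 1, 2` the pair `(S, N)` is a Nijenhuis
pair on the pre-Lie-morphism triple `((g*, ·^{r_i}), (g, ·), r_i♯)`. -/
theorem compatible_sMatrices_give_nijenhuis_pair {K : Type*} [Field K] [CharZero K]
    {g : Type*} [AddCommGroup g] [Module K g] [FiniteDimensional K g]
    (mul : g →ₗ[K] g →ₗ[K] g)
    (hpre : ∀ x y z : g,
      mul (mul x y) z - mul x (mul y z) = mul (mul y x) z - mul y (mul x z))
    (r₁ r₂ : Module.Dual K g →ₗ[K] g)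
    (hsymm₁ : ∀ ξ η : Module.Dual K g, η (r₁ ξ) = ξ (r₁ η))
    (hsymm₂ : ∀ ξ η : Module.Dual K g, η (r₂ ξ) = ξ (r₂ η))
    (hs₁ : IsSMatrixMap mul r₁) (hs₂ : IsSMatrixMap mul r₂)
    (hcompat : ∀ k₁ k₂ : K, IsSMatrixMap mul (k₁ • r₁ + k₂ • r₂))
    (hbij : Function.Bijective r₂)
    (N : g →ₗ[K] g) (hN : ∀ ξ : Module.Dual K g, N (r₂ ξ) = r₁ ξ)
    (S : Module.Dual K g →ₗ[K] Module.Dual K g)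
    (hS : ∀ ξ : Module.Dual K g, r₂ (S ξ) = r₁ ξ) :
    (∀ ξ η : Module.Dual K g,
      sProd mul r₁ (S ξ) (S η)
        = S (sProd mul r₁ (S ξ) η + sProd mul r₁ ξ (S η) - S (sProd mul r₁ ξ η))) ∧
    (∀ ξ η : Module.Dual K g,
      sProd mul r₂ (S ξ) (S η)
        = S (sProd mul r₂ (S ξ) η + sProd mul r₂ ξ (S η) - S (sProd mul r₂ ξ η))) ∧
    (∀ x y : g, mul (N x) (N y) = N (mul (N x) y + mul x (N y) - N (mul x y))) ∧
    (∀ ξ : Module.Dual K g, N (r₁ (S ξ)) = N (N (r₁ ξ))) ∧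
    (∀ ξ : Module.Dual K g, N (r₂ (S ξ)) = N (N (r₂ ξ))) := by
  obtain ⟨rinj, rsurj⟩ := hbij
  -- `S` is self-adjoint with respect to the pairing induced by `r₂`
  have sadj : ∀ (α γ : Module.Dual K g), S α (r₂ γ) = α (r₂ (S γ)) := by
    intro α γ
    calc S α (r₂ γ) = γ (r₂ (S α)) := hsymm₂ γ (S α)
      _ = γ (r₁ α) := by rw [hS]
      _ = α (r₁ γ) := hsymm₁ α γ
      _ = α (r₂ (S γ)) := by rw [hS]
  -- `N` is the adjoint of `S`
  have adjN : ∀ (f : Module.Dual K g) (z : g), f (N z) = S f z := by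
    intro f z
    obtain ⟨w, rfl⟩ := rsurj z
    calc f (N (r₂ w)) = f (r₁ w) := by rw [hN]
      _ = w (r₁ f) := hsymm₁ w f
      _ = w (r₂ (S f)) := by rw [hS]
      _ = S f (r₂ w) := hsymm₂ (S f) w
  -- scalar form of the `s`-matrix condition for `r₂`
  have h2 : ∀ a b c : Module.Dual K g,
      - a (mul (r₂ b) (r₂ c)) + b (mul (r₂ a) (r₂ c))
        + c (mul (r₂ a) (r₂ b)) - c (mul (r₂ b) (r₂ a)) = 0 := by
    intro a b c
    have h := hs₂ a b c
    simp only [map_sub] at h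
    linear_combination h
  -- scalar form of the `s`-matrix condition for `r₁ = r₂ ∘ S`
  have h1 : ∀ a b c : Module.Dual K g,
      - a (mul (r₂ (S b)) (r₂ (S c))) + b (mul (r₂ (S a)) (r₂ (S c)))
        + c (mul (r₂ (S a)) (r₂ (S b))) - c (mul (r₂ (S b)) (r₂ (S a))) = 0 := by
    intro a b c
    have h := hs₁ a b c
    simp only [← hS, map_sub] at h
    linear_combination h
  -- scalar form of the mixed (compatibility) condition
  have hM : ∀ a b c : Module.Dual K g,
      - a (mul (r₂ (S b)) (r₂ c)) - a (mul (r₂ b) (r₂ (S c)))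
        + b (mul (r₂ (S a)) (r₂ c)) + b (mul (r₂ a) (r₂ (S c)))
        + c (mul (r₂ (S a)) (r₂ b)) + c (mul (r₂ a) (r₂ (S b)))
        - c (mul (r₂ (S b)) (r₂ a)) - c (mul (r₂ b) (r₂ (S a))) = 0 := by
    intro a b c
    have h := hcompat 1 1 a b c
    simp only [LinearMap.add_apply, LinearMap.smul_apply, one_smul, map_add, map_sub,
      LinearMap.map_add, ← hS] at h
    linear_combination h - h2 a b c - h1 a b c
  -- key scalar identity for the third statement
  have hG3 : ∀ ξ η f : Module.Dual K g,
      f (mul (r₂ (S ξ)) (r₂ (S η)))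
        = S f (mul (r₂ (S ξ)) (r₂ η)) + S f (mul (r₂ ξ) (r₂ (S η)))
          - S (S f) (mul (r₂ ξ) (r₂ η)) := by
    intro ξ η f
    linear_combination h2 ξ (S (S f)) η + h1 ξ f η - hM ξ (S f) η
  have item3 : ∀ x y : g, mul (N x) (N y) = N (mul (N x) y + mul x (N y) - N (mul x y)) := by
    intro x y
    obtain ⟨ξ, rfl⟩ := rsurj x
    obtain ⟨η, rfl⟩ := rsurj y
    rw [← sub_eq_zero, ← Module.forall_dual_apply_eq_zero_iff K]
    intro f
    simp only [map_sub, adjN, hN, ← hS, map_add]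
    linear_combination hG3 ξ η f
  refine ⟨?_, ?_, item3, ?_, ?_⟩
  · -- S is Nijenhuis on (g*, ·^{r₁})
    intro ξ η
    apply LinearMap.ext
    intro y
    obtain ⟨γ, rfl⟩ := rsurj y
    simp only [sProd, LinearMap.add_apply, LinearMap.sub_apply, LinearMap.neg_apply,
      LinearMap.comp_apply, LinearMap.flip_apply, map_sub, map_add, ← hS, sadj]
    linear_combination h2 (S ξ) (S γ) (S η) + h1 ξ γ (S η) - h1 ξ (S γ) η
      + h1 (S ξ) γ η - hM (S ξ) γ (S η)
  · -- S is Nijenhuis on (g*, ·^{r₂})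
    intro ξ η
    apply LinearMap.ext
    intro y
    obtain ⟨γ, rfl⟩ := rsurj y
    simp only [sProd, LinearMap.add_apply, LinearMap.sub_apply, LinearMap.neg_apply,
      LinearMap.comp_apply, LinearMap.flip_apply, map_sub, map_add, ← hS, sadj]
    linear_combination h2 ξ (S γ) (S η) - h2 (S ξ) γ (S η) + h2 (S ξ) (S γ) η
      + h1 ξ γ η - hM ξ (S γ) η
  · intro ξ
    rw [← hS ξ, hN (S ξ)]
  · intro ξ
    rw [hN ξ, ← hS ξ]
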